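/- Let Γ = {(i₁,j₁),…,(i_k,j_k)} be an antichain in the poset Δ⁺ of positive roots of type A_n, with i₁ < ⋯ < i_k and j₁ < ⋯ < j_k. Then the dual set Γ*, whose first-coordinate sequence is [n] \ {j₁,…,j_k} and whose second-coordinate sequence is [n] \ {i₁,…,i_k}, both listed in increasing order, is again an antichain in Δ⁺, and #Γ + #Γ* = n. Moreover, if Γ consists only of simple roots, Γ ⊆ Π = {α₁,…,α_n}, then Γ* = Π \ Γ. -/

import Mathlib

open Finset

/-- The root order on pairs: `(i,j) ≼ (i',j')` iff `i' ≤ i` and `j ≤ j'`. -/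
def rle (p q : ℕ × ℕ) : Prop := q.1 ≤ p.1 ∧ p.2 ≤ q.2

instance : DecidableRel rle := fun p q =>
  inferInstanceAs (Decidable (q.1 ≤ p.1 ∧ p.2 ≤ q.2))

/-- The positive roots of type `A_n`, modelled as pairs `(i,j)` with `1 ≤ i ≤ j ≤ n`. -/
def roots (n : ℕ) : Finset (ℕ × ℕ) :=
  ((Finset.Icc 1 n) ×ˢ (Finset.Icc 1 n)).filter (fun p => p.1 ≤ p.2)

/-- `Γ` is an antichain in `Δ⁺(A_n)`: a set of pairwise incomparable positive roots. -/
def IsAC (n : ℕ) (Γ : Finset (ℕ × ℕ)) : Prop :=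
  Γ ⊆ roots n ∧ ∀ p ∈ Γ, ∀ q ∈ Γ, rle p q → p = q

/-- The upper ideal `I(Γ) = {x ∈ Δ⁺ : ∃ γ ∈ Γ, γ ≼ x}` generated by `Γ`. -/
def upIdeal (n : ℕ) (Γ : Finset (ℕ × ℕ)) : Finset (ℕ × ℕ) :=
  (roots n).filter (fun x => ∃ γ ∈ Γ, rle γ x)

/-- The set of maximal elements of `S` with respect to the root order. -/
def maxOf (S : Finset (ℕ × ℕ)) : Finset (ℕ × ℕ) :=
  S.filter (fun x => ∀ y ∈ S, rle x y → y = x)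

/-- The set of minimal elements of `S` with respect to the root order. -/
def minOf (S : Finset (ℕ × ℕ)) : Finset (ℕ × ℕ) :=
  S.filter (fun x => ∀ y ∈ S, rle y x → y = x)

/-- The reverse operator `𝔛`, sending an antichain `Γ` to the set of maximal
elements of `Δ⁺ \ I(Γ)`. -/
def Xrev (n : ℕ) (Γ : Finset (ℕ × ℕ)) : Finset (ℕ × ℕ) :=
  maxOf (roots n \ upIdeal n Γ)

/-- `r_Γ(γ) = #(I(Γ) \ {γ})_min − #I(Γ)_min + 1`. -/
def rGam (n : ℕ) (Γ : Finset (ℕ × ℕ)) (γ : ℕ × ℕ) : ℤ :=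
  ((minOf (upIdeal n Γ \ {γ})).card : ℤ) - ((minOf (upIdeal n Γ)).card : ℤ) + 1

/-- The OY-number `𝒴(Γ) = Σ_{γ ∈ Γ} r_Γ(γ)`; in particular `𝒴(∅) = 0`. -/
def OY (n : ℕ) (Γ : Finset (ℕ × ℕ)) : ℤ := ∑ γ ∈ Γ, rGam n Γ γ

/-- The dual antichain `Γ*`: if `Γ` has first coordinates `𝐢` and second
coordinates `𝐣`, then `Γ*` pairs the elements of `[n] \ 𝐣` (listed increasingly,
as first coordinates) with the elements of `[n] \ 𝐢` (listed increasingly,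
as second coordinates). -/
def dualAC (n : ℕ) (Γ : Finset (ℕ × ℕ)) : Finset (ℕ × ℕ) :=
  let iStar := ((Finset.Icc 1 n) \ (Γ.image Prod.snd)).sort (· ≤ ·)
  let jStar := ((Finset.Icc 1 n) \ (Γ.image Prod.fst)).sort (· ≤ ·)
  (Finset.range iStar.length).image (fun t => (iStar.getD t 0, jStar.getD t 0))

/-- The set `Π = {α₁,…,α_n}` of simple roots, `α_i = (i,i)`. -/
def simples (n : ℕ) : Finset (ℕ × ℕ) := (Finset.Icc 1 n).image (fun t => (t, t))

/-!
Write `I` and `J` for the first and second coordinates of `Γ`. Incomparability makes both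
projections injective on `Γ`, so `[n] \ J` and `[n] \ I` both have `n - #Γ` elements and `Γ*`
pairs their `t`-th smallest elements; both coordinates increase strictly with `t`, so `Γ*` is an
antichain with `n - #Γ` elements. It lies in `Δ⁺` because `i ≤ j` for every root `(i, j)`: for
each `m`, `J` has at most as many elements `≤ m` as `I`, hence `[n] \ J` has at least as many as
`[n] \ I`, and so the `t`-th element of `[n] \ J` is at most that of `[n] \ I`. If `Γ ⊆ Π` then
`I = J`, and `Γ*` is the diagonal over `[n] \ I`, which is `Π \ Γ`.
-/

section OrderEmbOfFin

variable {α : Type*} [LinearOrder α] {k : ℕ}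

theorem Finset.filter_le_orderEmbOfFin (S : Finset α) (h : #S = k) (i : Fin k) :
    S.filter (· ≤ S.orderEmbOfFin h i) = (Iic i).map (S.orderEmbOfFin h).toEmbedding := by
  ext x
  simp only [mem_filter, mem_map, mem_Iic, RelEmbedding.coe_toEmbedding]
  constructor
  · rintro ⟨hx, hle⟩
    obtain ⟨j, rfl⟩ : x ∈ Set.range (S.orderEmbOfFin h) := by simpa using hx
    exact ⟨j, (S.orderEmbOfFin h).le_iff_le.mp hle, rfl⟩
  · rintro ⟨j, hj, rfl⟩
    exact ⟨S.orderEmbOfFin_mem h j, (S.orderEmbOfFin h).le_iff_le.mpr hj⟩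

theorem Finset.filter_lt_orderEmbOfFin (S : Finset α) (h : #S = k) (i : Fin k) :
    S.filter (· < S.orderEmbOfFin h i) = (Iio i).map (S.orderEmbOfFin h).toEmbedding := by
  ext x
  simp only [mem_filter, mem_map, mem_Iio, RelEmbedding.coe_toEmbedding]
  constructor
  · rintro ⟨hx, hlt⟩
    obtain ⟨j, rfl⟩ : x ∈ Set.range (S.orderEmbOfFin h) := by simpa using hx
    exact ⟨j, (S.orderEmbOfFin h).lt_iff_lt.mp hlt, rfl⟩
  · rintro ⟨j, hj, rfl⟩
    exact ⟨S.orderEmbOfFin_mem h j, (S.orderEmbOfFin h).lt_iff_lt.mpr hj⟩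

theorem Finset.orderEmbOfFin_le_of_card_filter_le {S T : Finset α} (hS : #S = k) (hT : #T = k)
    (hST : ∀ m, #(T.filter (· ≤ m)) ≤ #(S.filter (· ≤ m))) (i : Fin k) :
    S.orderEmbOfFin hS i ≤ T.orderEmbOfFin hT i := by
  by_contra! hlt
  have hsub : S.filter (· ≤ T.orderEmbOfFin hT i) ⊆ S.filter (· < S.orderEmbOfFin hS i) :=
    monotone_filter_right S fun _ _ hx => hx.trans_lt hlt
  have hcard := (hST (T.orderEmbOfFin hT i)).trans (card_le_card hsub)
  rw [filter_le_orderEmbOfFin, filter_lt_orderEmbOfFin, card_map, card_map, Fin.card_Iic,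
    Fin.card_Iio] at hcard
  omega

theorem Finset.orderEmbOfFin_congr {S T : Finset α} (hST : S = T) (hS : #S = k) (hT : #T = k)
    (i : Fin k) : S.orderEmbOfFin hS i = T.orderEmbOfFin hT i := by
  subst hST
  rfl

theorem Finset.image_range_sort_getD_eq (S T : Finset α) (d : α) (hS : #S = k) (hT : #T = k) :
    (range (S.sort (· ≤ ·)).length).image
        (fun t => ((S.sort (· ≤ ·)).getD t d, (T.sort (· ≤ ·)).getD t d)) =
      univ.image fun i : Fin k => (S.orderEmbOfFin hS i, T.orderEmbOfFin hT i) := by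
  ext p
  simp only [mem_image, mem_range, mem_univ, true_and, length_sort, hS, Fin.exists_iff,
    orderEmbOfFin_apply, Fin.getElem_fin]
  refine exists_congr fun t => ⟨?_, ?_⟩ <;> rintro ⟨ht, rfl⟩ <;> refine ⟨ht, ?_⟩ <;>
    rw [List.getD_eq_getElem _ _ (by simpa [hS]), List.getD_eq_getElem _ _ (by simpa [hT])]

end OrderEmbOfFin

theorem Finset.card_filter_sdiff_le_of_card_filter_le {α : Type*} [DecidableEq α]
    {U X Y : Finset α} (p : α → Prop) [DecidablePred p] (hX : X ⊆ U) (hY : Y ⊆ U)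
    (h : #(Y.filter p) ≤ #(X.filter p)) : #((U \ X).filter p) ≤ #((U \ Y).filter p) := by
  have hsplit : ∀ Z ⊆ U, #((U \ Z).filter p) = #(U.filter p) - #(Z.filter p) := fun Z hZ => by
    rw [← card_sdiff_of_subset (filter_subset_filter p hZ)]
    congr 1
    ext
    simp only [mem_filter, mem_sdiff]
    tauto
  rw [hsplit X hX, hsplit Y hY]
  have := card_le_card (filter_subset_filter p hX)
  omega

theorem mem_roots {n : ℕ} {p : ℕ × ℕ} : p ∈ roots n ↔ 1 ≤ p.1 ∧ p.1 ≤ p.2 ∧ p.2 ≤ n := by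
  simp only [roots, mem_filter, mem_product, mem_Icc]
  omega

theorem isAC_image_pair {ι : Type*} [Fintype ι] [PartialOrder ι] {n : ℕ} (e f : ι ↪o ℕ)
    (h : ∀ i, (e i, f i) ∈ roots n) : IsAC n (univ.image fun i => (e i, f i)) := by
  refine ⟨fun p hp => ?_, ?_⟩
  · obtain ⟨i, -, rfl⟩ := mem_image.mp hp
    exact h i
  · simp only [mem_image, mem_univ, true_and]
    rintro _ ⟨i, rfl⟩ _ ⟨j, rfl⟩ ⟨hji, hij⟩
    rw [le_antisymm (e.le_iff_le.mp hji) (f.le_iff_le.mp hij)]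

namespace IsAC

variable {n : ℕ} {Γ : Finset (ℕ × ℕ)}

theorem injOn_fst (hΓ : IsAC n Γ) : Set.InjOn Prod.fst (Γ : Set (ℕ × ℕ)) := by
  intro p hp q hq h
  rcases le_total p.2 q.2 with h2 | h2
  · exact hΓ.2 p hp q hq ⟨h.ge, h2⟩
  · exact (hΓ.2 q hq p hp ⟨h.le, h2⟩).symm

theorem injOn_snd (hΓ : IsAC n Γ) : Set.InjOn Prod.snd (Γ : Set (ℕ × ℕ)) := by
  intro p hp q hq h
  rcases le_total p.1 q.1 with h1 | h1
  · exact (hΓ.2 q hq p hp ⟨h1, h.ge⟩).symm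
  · exact hΓ.2 p hp q hq ⟨h1, h.le⟩

theorem image_fst_subset (hΓ : IsAC n Γ) : Γ.image Prod.fst ⊆ Icc 1 n := by
  intro a ha
  obtain ⟨p, hp, rfl⟩ := mem_image.mp ha
  have := mem_roots.mp (hΓ.1 hp)
  exact mem_Icc.mpr (by omega)

theorem image_snd_subset (hΓ : IsAC n Γ) : Γ.image Prod.snd ⊆ Icc 1 n := by
  intro a ha
  obtain ⟨p, hp, rfl⟩ := mem_image.mp ha
  have := mem_roots.mp (hΓ.1 hp)
  exact mem_Icc.mpr (by omega)

theorem card_le (hΓ : IsAC n Γ) : #Γ ≤ n := by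
  simpa [card_image_of_injOn hΓ.injOn_fst] using card_le_card hΓ.image_fst_subset

theorem card_sdiff_image_fst (hΓ : IsAC n Γ) : #(Icc 1 n \ Γ.image Prod.fst) = n - #Γ := by
  rw [card_sdiff_of_subset hΓ.image_fst_subset, Nat.card_Icc, card_image_of_injOn hΓ.injOn_fst,
    Nat.add_sub_cancel]

theorem card_sdiff_image_snd (hΓ : IsAC n Γ) : #(Icc 1 n \ Γ.image Prod.snd) = n - #Γ := by
  rw [card_sdiff_of_subset hΓ.image_snd_subset, Nat.card_Icc, card_image_of_injOn hΓ.injOn_snd,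
    Nat.add_sub_cancel]

theorem card_filter_image_snd_le (hΓ : IsAC n Γ) (m : ℕ) :
    #((Γ.image Prod.snd).filter (· ≤ m)) ≤ #((Γ.image Prod.fst).filter (· ≤ m)) := by
  have hsub : (Γ.filter (·.2 ≤ m)).image Prod.fst ⊆ (Γ.image Prod.fst).filter (· ≤ m) := by
    intro a ha
    obtain ⟨p, hp, rfl⟩ := mem_image.mp ha
    obtain ⟨hpΓ, hpm⟩ := mem_filter.mp hp
    have := mem_roots.mp (hΓ.1 hpΓ)
    exact mem_filter.mpr ⟨mem_image_of_mem _ hpΓ, by omega⟩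
  calc #((Γ.image Prod.snd).filter (· ≤ m))
      = #((Γ.filter (·.2 ≤ m)).image Prod.snd) := by rw [filter_image]
    _ = #(Γ.filter (·.2 ≤ m)) := card_image_of_injOn (hΓ.injOn_snd.mono (filter_subset _ _))
    _ = #((Γ.filter (·.2 ≤ m)).image Prod.fst) :=
        (card_image_of_injOn (hΓ.injOn_fst.mono (filter_subset _ _))).symm
    _ ≤ _ := card_le_card hsub

theorem dualAC_eq_image (hΓ : IsAC n Γ) :
    dualAC n Γ = univ.image fun i : Fin (n - #Γ) =>
      ((Icc 1 n \ Γ.image Prod.snd).orderEmbOfFin hΓ.card_sdiff_image_snd i,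
        (Icc 1 n \ Γ.image Prod.fst).orderEmbOfFin hΓ.card_sdiff_image_fst i) :=
  image_range_sort_getD_eq _ _ 0 _ _

end IsAC

section Simples

variable {n : ℕ} {Γ : Finset (ℕ × ℕ)}

theorem fst_eq_snd_of_subset_simples (h : Γ ⊆ simples n) {p : ℕ × ℕ} (hp : p ∈ Γ) :
    p.1 = p.2 := by
  obtain ⟨t, -, rfl⟩ := mem_image.mp (h hp)
  rfl

theorem image_fst_eq_image_snd_of_subset_simples (h : Γ ⊆ simples n) :
    Γ.image Prod.fst = Γ.image Prod.snd :=
  image_congr fun _ hp => fst_eq_snd_of_subset_simples h hp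

theorem simples_sdiff_of_subset (h : Γ ⊆ simples n) :
    simples n \ Γ = (Icc 1 n \ Γ.image Prod.snd).image fun t => (t, t) := by
  ext p
  simp only [simples, mem_sdiff, mem_image]
  constructor
  · rintro ⟨⟨t, ht, rfl⟩, hnot⟩
    refine ⟨t, ⟨ht, ?_⟩, rfl⟩
    rintro ⟨q, hq, rfl⟩
    have hq_diag : (q.2, q.2) = q := Prod.ext (fst_eq_snd_of_subset_simples h hq).symm rfl
    exact hnot (hq_diag ▸ hq)
  · rintro ⟨t, ⟨ht, hnot⟩, rfl⟩
    exact ⟨⟨t, ht, rfl⟩, fun hmem => hnot ⟨_, hmem, rfl⟩⟩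

end Simples

theorem stmt12_general (n : ℕ) (Γ : Finset (ℕ × ℕ)) (hΓ : IsAC n Γ) :
    IsAC n (dualAC n Γ) ∧
    Γ.card + (dualAC n Γ).card = n ∧
    (Γ ⊆ simples n → dualAC n Γ = simples n \ Γ) := by
  rw [hΓ.dualAC_eq_image]
  set e := (Icc 1 n \ Γ.image Prod.snd).orderEmbOfFin hΓ.card_sdiff_image_snd
  set f := (Icc 1 n \ Γ.image Prod.fst).orderEmbOfFin hΓ.card_sdiff_image_fst
  have hroot : ∀ i, (e i, f i) ∈ roots n := fun i => by
    have he := mem_sdiff.mp (orderEmbOfFin_mem _ hΓ.card_sdiff_image_snd i)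
    have hf := mem_sdiff.mp (orderEmbOfFin_mem _ hΓ.card_sdiff_image_fst i)
    have hef : e i ≤ f i := orderEmbOfFin_le_of_card_filter_le _ _ (fun m =>
      card_filter_sdiff_le_of_card_filter_le _ hΓ.image_fst_subset hΓ.image_snd_subset
        (hΓ.card_filter_image_snd_le m)) i
    rw [mem_Icc] at he hf
    exact mem_roots.mpr ⟨he.1.1, hef, hf.1.2⟩
  refine ⟨isAC_image_pair e f hroot, ?_, fun hsub => ?_⟩
  · rw [card_image_of_injective _ fun i j h => e.injective (congrArg Prod.fst h), card_univ,
      Fintype.card_fin]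
    have := hΓ.card_le
    omega
  · have hfe : ∀ i, f i = e i :=
      orderEmbOfFin_congr (by rw [image_fst_eq_image_snd_of_subset_simples hsub]) _ _
    simp_rw [hfe]
    rw [simples_sdiff_of_subset hsub, ← image_orderEmbOfFin_univ _ hΓ.card_sdiff_image_snd,
      image_image]
    rfl

/-- For an antichain `Γ` in `Δ⁺(A_n)`, the dual set `Γ*` is again an antichain,
`#Γ + #Γ* = n`, and if `Γ ⊆ Π` then `Γ* = Π \ Γ`. -/
theorem stmt12 (n : ℕ) (hn : 1 ≤ n) (Γ : Finset (ℕ × ℕ)) (hΓ : IsAC n Γ) :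
    IsAC n (dualAC n Γ) ∧
    Γ.card + (dualAC n Γ).card = n ∧
    (Γ ⊆ simples n → dualAC n Γ = simples n \ Γ) :=
  stmt12_general n Γ hΓ
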